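/- Let N be a torsion-free nilpotent group. Then the quotient N/Z(N) of N by its center is torsion-free. -/

import Mathlib

/-!
If `z ∈ Z_{i+2}(N)` then `⁅z, y⁆` is central modulo `Z_i`, so `⁅z ^ n, y⁆ ≡ ⁅z, y⁆ ^ n` modulo
`Z_i`. Hence if moreover `z ^ n ∈ Z_{i+1}`, then `⁅z, y⁆ ∈ Z_{i+1}` has its `n`-th power in `Z_i`,
and induction on `i`, starting from torsion-freeness of `N` itself, shows that every upper
central factor `Z_{i+1}/Z_i` is torsion-free. In a nilpotent group some `Z_m` is all of `N`, so
descending along the series, `x ^ n ∈ Z_1 = Z(N)` forces `x ∈ Z(N)`.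
-/

/-- A monoid is torsion-free if no nontrivial element has finite order
(the definition removed from Mathlib, restored with its old meaning). -/
def Monoid.IsTorsionFree (G : Type*) [Monoid G] : Prop :=
  ∀ g : G, g ≠ 1 → ¬IsOfFinOrder g

open scoped commutatorElement

theorem commutatorElement_pow_left_of_commute {G : Type*} [Group G] {g h : G}
    (hc : Commute ⁅g, h⁆ g) (n : ℕ) : ⁅g ^ n, h⁆ = ⁅g, h⁆ ^ n := by
  induction n with
  | zero => simp
  | succ n ih =>
    calc ⁅g ^ (n + 1), h⁆ = g * ⁅g ^ n, h⁆ * g⁻¹ * ⁅g, h⁆ := by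
          simp only [commutatorElement_def]; group
      _ = ⁅g, h⁆ ^ (n + 1) := by
          rw [ih, ← (hc.pow_left n).eq, mul_inv_cancel_right, pow_succ]

theorem QuotientGroup.isTorsionFree_of_pow_mem {G : Type*} [Group G] {H : Subgroup G} [H.Normal]
    (hH : ∀ (x : G) {n : ℕ}, n ≠ 0 → x ^ n ∈ H → x ∈ H) : Monoid.IsTorsionFree (G ⧸ H) := by
  intro g hg hfin
  obtain ⟨x, rfl⟩ := QuotientGroup.mk_surjective g
  refine hg ((QuotientGroup.eq_one_iff x).mpr (hH x hfin.orderOf_pos.ne' ?_))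
  rw [← QuotientGroup.eq_one_iff, QuotientGroup.mk_pow, pow_orderOf_eq_one]

namespace Subgroup

variable {G : Type*} [Group G]

theorem mem_upperCentralSeries_succ_iff_mk_mem_center {n : ℕ} {x : G} :
    x ∈ upperCentralSeries G (n + 1) ↔ (x : G ⧸ upperCentralSeries G n) ∈ center _ := by
  rw [mem_upperCentralSeries_succ_iff, ← mem_upperCentralSeriesStep,
    upperCentralSeriesStep_eq_comap_center]
  rfl

theorem commutatorElement_pow_left_mem_upperCentralSeries_iff {i : ℕ} {g h : G}
    (hgh : ⁅g, h⁆ ∈ upperCentralSeries G (i + 1)) (n : ℕ) :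
    ⁅g ^ n, h⁆ ∈ upperCentralSeries G i ↔ ⁅g, h⁆ ^ n ∈ upperCentralSeries G i := by
  let π := QuotientGroup.mk' (upperCentralSeries G i)
  have hc : Commute ⁅π g, π h⁆ (π g) := by
    rw [← map_commutatorElement]
    exact (mem_center_iff.mp (mem_upperCentralSeries_succ_iff_mk_mem_center.mp hgh) (π g)).symm
  have hπ : π ⁅g ^ n, h⁆ = π (⁅g, h⁆ ^ n) := by
    simpa only [map_pow, map_commutatorElement] using commutatorElement_pow_left_of_commute hc n
  rw [← QuotientGroup.eq_one_iff, ← QuotientGroup.eq_one_iff]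
  exact Eq.congr_left hπ

theorem mem_upperCentralSeries_of_mem_succ_of_pow_mem (htf : Monoid.IsTorsionFree G)
    {n : ℕ} (hn : n ≠ 0) :
    ∀ {i : ℕ} {z : G}, z ∈ upperCentralSeries G (i + 1) → z ^ n ∈ upperCentralSeries G i →
      z ∈ upperCentralSeries G i
  | 0, z, _, hzn => by
    rw [upperCentralSeries_zero, mem_bot] at hzn ⊢
    by_contra hz
    exact htf z hz (isOfFinOrder_iff_pow_eq_one.mpr ⟨n, Nat.pos_of_ne_zero hn, hzn⟩)
  | i + 1, z, hz, hzn => fun y => by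
    have hzy : ⁅z, y⁆ ∈ upperCentralSeries G (i + 1) := hz y
    refine mem_upperCentralSeries_of_mem_succ_of_pow_mem htf hn hzy ?_
    exact (commutatorElement_pow_left_mem_upperCentralSeries_iff hzy n).mp (hzn y)

theorem mem_upperCentralSeries_of_pow_mem [Group.IsNilpotent G] (htf : Monoid.IsTorsionFree G)
    {n : ℕ} (hn : n ≠ 0) {i : ℕ} {z : G} (hzn : z ^ n ∈ upperCentralSeries G i) :
    z ∈ upperCentralSeries G i := by
  obtain ⟨m, hm⟩ := Group.IsNilpotent.nilpotent G
  suffices descend : ∀ j, z ∈ upperCentralSeries G (i + j) → z ∈ upperCentralSeries G i from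
    descend m (upperCentralSeries_mono G (Nat.le_add_left m i) (hm ▸ mem_top z))
  intro j
  induction j with
  | zero => exact id
  | succ j ih =>
    refine fun hz => ih (mem_upperCentralSeries_of_mem_succ_of_pow_mem htf hn hz ?_)
    exact upperCentralSeries_mono G (Nat.le_add_right i j) hzn

end Subgroup

/-- Let `N` be a torsion-free nilpotent group.  Then the quotient `N/Z(N)` of `N`
by its center is torsion-free. -/
theorem stmt_9 {N : Type*} [Group N] [Group.IsNilpotent N]
    (htf : Monoid.IsTorsionFree N) :
    Monoid.IsTorsionFree (N ⧸ Subgroup.center N) :=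
  QuotientGroup.isTorsionFree_of_pow_mem fun _ _ hn hxn => by
    rw [← Subgroup.upperCentralSeries_one] at hxn ⊢
    exact Subgroup.mem_upperCentralSeries_of_pow_mem htf hn hxn
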